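/- Let A be a Young function, a = A', and suppose t·a(t) ≤ p·A(t) for all t > 0, where p > 1. Let Ω be a bounded open set, u a weak eigenfunction of the a-Laplacian with eigenvalue λ(α), normalized so that ∫_Ω A(|u|)dx = α and ∫_Ω A(|∇u|)dx = E(α). Then (1/p)·E(α)/α ≤ λ(α) ≤ p·E(α)/α. -/

import Mathlib

open MeasureTheory Set

/-
The pointwise inequalities `A t ≤ t a(t) ≤ p A(t)` for `t ≥ 0` (the first because `a` is
nondecreasing, the second by hypothesis) integrate to `α ≤ ∫ a(|u|)|u| ≤ p α` and
`E(α) ≤ ∫ a(|∇u|)|∇u| ≤ p E(α)`; dividing the second chain by the first bounds `λ(α)`.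
-/

theorem MonotoneOn.intervalIntegral_le_sub_mul {a : ℝ → ℝ} {s t : ℝ}
    (ha : MonotoneOn a (Icc s t)) (hst : s ≤ t) :
    ∫ τ in s..t, a τ ≤ (t - s) * a t := by
  have hint : IntervalIntegrable a volume s t := by
    apply MonotoneOn.intervalIntegrable
    rwa [uIcc_of_le hst]
  calc ∫ τ in s..t, a τ ≤ ∫ _ in s..t, a t :=
        intervalIntegral.integral_mono_on hst hint intervalIntegrable_const
          fun τ hτ => ha hτ (right_mem_Icc.2 hst) hτ.2
    _ = (t - s) * a t := by simp

theorem primitive_le_mul_le_const_mul {A a : ℝ → ℝ} {p t : ℝ}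
    (hA : ∀ t, A t = ∫ τ in (0:ℝ)..t, a τ) (ha : MonotoneOn a (Ici 0))
    (hΔ : ∀ t > (0:ℝ), t * a t ≤ p * A t) (ht : 0 ≤ t) :
    A t ≤ a t * t ∧ a t * t ≤ p * A t := by
  refine ⟨?_, ?_⟩
  · rw [hA, mul_comm]
    simpa using (ha.mono Icc_subset_Ici_self).intervalIntegral_le_sub_mul ht
  · rcases ht.eq_or_lt with rfl | ht
    · simp [hA]
    · rw [mul_comm]
      exact hΔ t ht

theorem integral_le_integral_le_const_mul {X : Type*} [MeasurableSpace X] {μ : Measure X}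
    {f g : X → ℝ} {p : ℝ} (hf : Integrable f μ) (hg : Integrable g μ)
    (hfg : ∀ x, f x ≤ g x ∧ g x ≤ p * f x) :
    ∫ x, f x ∂μ ≤ ∫ x, g x ∂μ ∧ ∫ x, g x ∂μ ≤ p * ∫ x, f x ∂μ := by
  refine ⟨integral_mono hf hg fun x => (hfg x).1, ?_⟩
  rw [← integral_const_mul]
  exact integral_mono hg (hf.const_mul p) fun x => (hfg x).2

theorem div_bounds_of_le_le_const_mul {p E N α D : ℝ} (hp : 1 < p) (hα : 0 < α) (hD : 0 < D)
    (hE : E ≤ N ∧ N ≤ p * E) (hα' : α ≤ D ∧ D ≤ p * α) :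
    1 / p * (E / α) ≤ N / D ∧ N / D ≤ p * (E / α) := by
  obtain ⟨hEN, hNE⟩ := hE
  obtain ⟨hαD, hDα⟩ := hα'
  -- `E ≤ N ≤ p E` with `p > 1` forces `E ≥ 0`.
  have hE0 : 0 ≤ E := by nlinarith
  have hp0 : 0 < p := by linarith
  constructor
  · rw [one_div_mul_eq_div, div_div, div_le_div_iff₀ (by positivity) hD]
    exact mul_le_mul hEN (hDα.trans_eq (mul_comm p α)) hD.le (hE0.trans hEN)
  · rw [← mul_div_assoc, div_le_div_iff₀ hD hα]
    exact mul_le_mul hNE hαD hα.le (by positivity)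

theorem eigenvalue_energy_comparison_general {n : ℕ} (A a : ℝ → ℝ) (p : ℝ)
    (hA : ∀ t : ℝ, A t = ∫ τ in (0:ℝ)..t, a τ)
    (hamono : MonotoneOn a (Set.Ici 0))
    (hp : 1 < p)
    (hΔ : ∀ t > (0:ℝ), t * a t ≤ p * A t)
    (Ω : Set (EuclideanSpace ℝ (Fin n)))
    (u : EuclideanSpace ℝ (Fin n) → ℝ)
    (α Eα lam : ℝ) (hα : 0 < α)
    (hnorm : ∫ x in Ω, A |u x| = α)
    (henergy : ∫ x in Ω, A ‖fderiv ℝ u x‖ = Eα)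
    (hint1 : IntegrableOn (fun x => A |u x|) Ω)
    (hint2 : IntegrableOn (fun x => A ‖fderiv ℝ u x‖) Ω)
    (hint3 : IntegrableOn (fun x => a |u x| * |u x|) Ω)
    (hint4 : IntegrableOn (fun x => a ‖fderiv ℝ u x‖ * ‖fderiv ℝ u x‖) Ω)
    (hden : 0 < ∫ x in Ω, a |u x| * |u x|)
    (hlam : lam = (∫ x in Ω, a ‖fderiv ℝ u x‖ * ‖fderiv ℝ u x‖) /
                  (∫ x in Ω, a |u x| * |u x|)) :
    (1 / p) * (Eα / α) ≤ lam ∧ lam ≤ p * (Eα / α) := by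
  have hpointwise {t : ℝ} (ht : 0 ≤ t) := primitive_le_mul_le_const_mul hA hamono hΔ ht
  have hmass := integral_le_integral_le_const_mul hint1 hint3 fun x => hpointwise (abs_nonneg (u x))
  have hgradient := integral_le_integral_le_const_mul hint2 hint4 fun x =>
    hpointwise (norm_nonneg (fderiv ℝ u x))
  rw [hnorm] at hmass
  rw [henergy] at hgradient
  rw [hlam]
  exact div_bounds_of_le_le_const_mul hp hα hden hgradient hmass

/-- Let A be a Young function with t·a(t) ≤ p·A(t) (p > 1), Ω bounded open,
u a weak eigenfunction of the a-Laplacian, i.e. a minimizer of E(α) whose eigenvalue is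
λ(α) = (∫_Ω a(|∇u|)|∇u|)/(∫_Ω a(|u|)|u|), normalized so that ∫_Ω A(|u|) = α and
∫_Ω A(|∇u|) = E(α).  Then (1/p)·E(α)/α ≤ λ(α) ≤ p·E(α)/α. -/
theorem eigenvalue_energy_comparison {n : ℕ} (A a : ℝ → ℝ) (p : ℝ)
    (hA : ∀ t : ℝ, A t = ∫ τ in (0:ℝ)..t, a τ)
    (hamono : MonotoneOn a (Set.Ici 0)) (ha0 : a 0 = 0)
    (hapos : ∀ t > (0:ℝ), 0 < a t)
    (hp : 1 < p)
    (hΔ : ∀ t > (0:ℝ), t * a t ≤ p * A t)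
    (Ω : Set (EuclideanSpace ℝ (Fin n))) (hΩo : IsOpen Ω) (hΩb : Bornology.IsBounded Ω)
    (u : EuclideanSpace ℝ (Fin n) → ℝ) (hu : Differentiable ℝ u)
    (α Eα lam : ℝ) (hα : 0 < α)
    (hnorm : ∫ x in Ω, A |u x| = α)
    (henergy : ∫ x in Ω, A ‖fderiv ℝ u x‖ = Eα)
    (hint1 : IntegrableOn (fun x => A |u x|) Ω)
    (hint2 : IntegrableOn (fun x => A ‖fderiv ℝ u x‖) Ω)
    (hint3 : IntegrableOn (fun x => a |u x| * |u x|) Ω)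
    (hint4 : IntegrableOn (fun x => a ‖fderiv ℝ u x‖ * ‖fderiv ℝ u x‖) Ω)
    (hden : 0 < ∫ x in Ω, a |u x| * |u x|)
    (hlam : lam = (∫ x in Ω, a ‖fderiv ℝ u x‖ * ‖fderiv ℝ u x‖) /
                  (∫ x in Ω, a |u x| * |u x|)) :
    (1 / p) * (Eα / α) ≤ lam ∧ lam ≤ p * (Eα / α) :=
  eigenvalue_energy_comparison_general A a p hA hamono hp hΔ Ω u α Eα lam hα hnorm henergy hint1
    hint2 hint3 hint4 hden hlam
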